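/- Ordered-interval (oracle) representation of classical 3-chain correlations: a correlation p in the minimal 3-chain scenario belongs to S0 if and only if, setting p0 := sum_{b,c} p(1,b,c|0,0), p1 := sum_{b,c} p(1,b,c|1,0), r0 := sum_{a,b} p(a,b,1|0,0), r1 := sum_{a,b} p(a,b,1|0,1), there exist real numbers alpha, beta with max(0, p0 + p1 - 1) <= alpha <= min(p0, p1) and max(0, r0 + r1 - 1) <= beta <= min(r0, r1), and a measurable function g : [0,1]^2 -> [0,1], such that for all a,b,c,x,z in {0,1}: p(a,b,c|x,z) equals the integral over (l1,l2) in [0,1]^2 with respect to Lebesgue measure of 1[f_A(x,l1) = a] * h_b(l1,l2) * 1[f_C(z,l2) = c], where h_1 := g, h_0 := 1 - g, and the response functions are the explicit interval functions: f_A(0,l) = 1 iff l < p0; f_A(1,l) = 1 iff l < alpha or p0 <= l < p0 + p1 - alpha; f_C(0,l) = 1 iff l < r0; f_C(1,l) = 1 iff l < beta or r0 <= l < r0 + r1 - beta. -/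

import Mathlib

open Finset

/-- A correlation in the minimal 3-chain scenario: `p a b c x z = p(a,b,c|x,z)`. -/
abbrev Corr : Type := Fin 2 → Fin 2 → Fin 2 → Fin 2 → Fin 2 → ℝ

/-- `p` is a valid correlation: nonnegative and normalized for every input pair. -/
def IsCorrelation (p : Corr) : Prop :=
  (∀ a b c x z, 0 ≤ p a b c x z) ∧
  (∀ x z, ∑ a : Fin 2, ∑ b : Fin 2, ∑ c : Fin 2, p a b c x z = 1)

/-- Probability weights on the finite set `Fin n`. -/
def IsWeights {n : ℕ} (q : Fin n → ℝ) : Prop :=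
  (∀ l, 0 ≤ q l) ∧ ∑ l, q l = 1

/-- A no-signalling box with binary outputs and input sets `X`, `Y`. -/
def IsNSBox {X Y : Type} [Fintype X] [Fintype Y]
    (nb : Fin 2 → Fin 2 → X → Y → ℝ) : Prop :=
  (∀ o1 o2 x y, 0 ≤ nb o1 o2 x y) ∧
  (∀ x y, ∑ o1 : Fin 2, ∑ o2 : Fin 2, nb o1 o2 x y = 1) ∧
  (∀ o1 x y y', ∑ o2 : Fin 2, nb o1 o2 x y = ∑ o2 : Fin 2, nb o1 o2 x y') ∧
  (∀ o2 x x' y, ∑ o1 : Fin 2, nb o1 o2 x y = ∑ o1 : Fin 2, nb o1 o2 x' y)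

/-- `S0`: classical 3-chain correlations. -/
def MemS0 (p : Corr) : Prop :=
  ∃ (n1 n2 : ℕ) (q1 : Fin n1 → ℝ) (q2 : Fin n2 → ℝ)
    (pA : Fin 2 → Fin 2 → Fin n1 → ℝ)
    (pB : Fin 2 → Fin n1 → Fin n2 → ℝ)
    (pC : Fin 2 → Fin 2 → Fin n2 → ℝ),
    IsWeights q1 ∧ IsWeights q2 ∧
    (∀ a x l1, 0 ≤ pA a x l1) ∧ (∀ x l1, ∑ a : Fin 2, pA a x l1 = 1) ∧
    (∀ b l1 l2, 0 ≤ pB b l1 l2) ∧ (∀ l1 l2, ∑ b : Fin 2, pB b l1 l2 = 1) ∧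
    (∀ c z l2, 0 ≤ pC c z l2) ∧ (∀ z l2, ∑ c : Fin 2, pC c z l2 = 1) ∧
    (∀ a b c x z, p a b c x z =
      ∑ l1, ∑ l2, q1 l1 * q2 l2 * pA a x l1 * pB b l1 l2 * pC c z l2)

/-- `S1^[AB^O BC^L]`: a no-signalling (OPT) source between Alice and Bob,
a classical source between Bob and Charlie. -/
def MemS1ABo (p : Corr) : Prop :=
  ∃ (n : ℕ) (q : Fin n → ℝ)
    (nb : Fin 2 → Fin 2 → Fin 2 → Fin n → ℝ)
    (pC : Fin 2 → Fin 2 → Fin n → ℝ),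
    IsWeights q ∧ IsNSBox nb ∧
    (∀ c z l, 0 ≤ pC c z l) ∧ (∀ z l, ∑ c : Fin 2, pC c z l = 1) ∧
    (∀ a b c x z, p a b c x z = ∑ l, q l * nb a b x l * pC c z l)

/-- `S1^[AB^L BC^O]`: a classical source between Alice and Bob,
a no-signalling (OPT) source between Bob and Charlie. -/
def MemS1BCo (p : Corr) : Prop :=
  ∃ (n : ℕ) (q : Fin n → ℝ)
    (pA : Fin 2 → Fin 2 → Fin n → ℝ)
    (nb : Fin 2 → Fin 2 → Fin n → Fin 2 → ℝ),
    IsWeights q ∧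
    (∀ a x l, 0 ≤ pA a x l) ∧ (∀ x l, ∑ a : Fin 2, pA a x l = 1) ∧
    IsNSBox nb ∧
    (∀ a b c x z, p a b c x z = ∑ l, q l * pA a x l * nb b c l z)

/-- `S2`: the no-signalling constraints of the 3-chain network. -/
def MemS2 (p : Corr) : Prop :=
  (∃ (pA : Fin 2 → Fin 2 → ℝ) (pC : Fin 2 → Fin 2 → ℝ),
    (∀ a x, 0 ≤ pA a x) ∧ (∀ x, ∑ a : Fin 2, pA a x = 1) ∧
    (∀ c z, 0 ≤ pC c z) ∧ (∀ z, ∑ c : Fin 2, pC c z = 1) ∧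
    (∀ a c x z, ∑ b : Fin 2, p a b c x z = pA a x * pC c z)) ∧
  (∀ a b x z z', ∑ c : Fin 2, p a b c x z = ∑ c : Fin 2, p a b c x z') ∧
  (∀ b c x x' z, ∑ a : Fin 2, p a b c x z = ∑ a : Fin 2, p a b c x' z)

open MeasureTheory

/-- `p0 = ∑_{b,c} p(1,b,c|0,0)`. -/
def margP0 (p : Corr) : ℝ := ∑ b : Fin 2, ∑ c : Fin 2, p 1 b c 0 0
/-- `p1 = ∑_{b,c} p(1,b,c|1,0)`. -/
def margP1 (p : Corr) : ℝ := ∑ b : Fin 2, ∑ c : Fin 2, p 1 b c 1 0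
/-- `r0 = ∑_{a,b} p(a,b,1|0,0)`. -/
def margR0 (p : Corr) : ℝ := ∑ a : Fin 2, ∑ b : Fin 2, p a b 1 0 0
/-- `r1 = ∑_{a,b} p(a,b,1|0,1)`. -/
def margR1 (p : Corr) : ℝ := ∑ a : Fin 2, ∑ b : Fin 2, p a b 1 0 1

/-!
A classical chain model with binary inputs uses Alice's hidden variable only through the
deterministic response `x ↦ a` it induces, of which there are four; averaging Bob's response
over the cells of these responses (and likewise on Charlie's side) turns any measurable model into
a finite one, which gives `⇐`.

For `⇒`, write each local response of Alice, with `u x = P(a = 1 | x)`, as the mixture of the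
deterministic responses `(1,1), (1,0), (0,1), (0,0)` with weights `min u₀ u₁`, `u₀ - min u₀ u₁`,
`u₁ - min u₀ u₁`, `1 - max u₀ u₁`. Lay out the pairs (deterministic response, hidden value) as
consecutive intervals of `[0, 1]`, grouped by deterministic response in this order: the groups end
at `α, p₀, p₀ + p₁ - α, 1` with `α = ∑ q · min u₀ u₁`, so Alice's response becomes the interval
function, and `α` lies between the Fréchet bounds of `p₀, p₁`. Bob's response becomes a step
function `g` on the grid of these intervals.
-/

namespace ThreeChain

open MeasureTheory Set

lemma le_one_of_sum_eq_one {ι : Type*} [Fintype ι] {f : ι → ℝ} (h₀ : ∀ i, 0 ≤ f i)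
    (h₁ : ∑ i, f i = 1) (i : ι) : f i ≤ 1 :=
  (single_le_sum (fun j _ => h₀ j) (mem_univ i)).trans_eq h₁

lemma eq_ite_of_sum_eq_one {f : Fin 2 → ℝ} (h : ∑ a, f a = 1) (a : Fin 2) :
    f a = if a = 1 then f 1 else 1 - f 1 := by
  rw [Fin.sum_univ_two] at h
  fin_cases a
  · simp only [Fin.zero_eta, Fin.isValue, zero_ne_one, if_false]
    linarith
  · rfl

lemma sum_range_mul_eq_sum_fin {M : Type*} [AddCommMonoid M] (f : ℕ → M) (n T : ℕ) :
    ∑ k ∈ range (n * T), f k = ∑ t ∈ range T, ∑ i : Fin n, f (n * t + i) := by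
  induction T with
  | zero => simp
  | succ T ih =>
    rw [Nat.mul_succ, sum_range_add, ih, sum_range_succ,
      Fin.sum_univ_eq_sum_range (fun i => f (n * T + i))]

section FiniteModels

variable {p : Corr} {Λ₁ Λ₂ : Type*} [Fintype Λ₁] [Fintype Λ₂] {q1 : Λ₁ → ℝ} {q2 : Λ₂ → ℝ}
  {pA : Fin 2 → Fin 2 → Λ₁ → ℝ} {pB : Fin 2 → Λ₁ → Λ₂ → ℝ} {pC : Fin 2 → Fin 2 → Λ₂ → ℝ}

lemma chain_marginal_left (hq2 : ∑ l, q2 l = 1) (hB : ∀ l1 l2, ∑ b : Fin 2, pB b l1 l2 = 1)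
    (hC : ∀ z l2, ∑ c : Fin 2, pC c z l2 = 1) (a x z : Fin 2) :
    ∑ b : Fin 2, ∑ c : Fin 2, ∑ l1, ∑ l2, q1 l1 * q2 l2 * pA a x l1 * pB b l1 l2 * pC c z l2 =
      ∑ l1, q1 l1 * pA a x l1 := by
  simp only [sum_comm (γ := Fin 2) (α := Λ₁), sum_comm (γ := Fin 2) (α := Λ₂), ← mul_sum, hC,
    mul_one, hB]
  refine sum_congr rfl fun l1 _ => ?_
  rw [← sum_mul, ← mul_sum, hq2, mul_one]

lemma chain_marginal_right (hq1 : ∑ l, q1 l = 1) (hA : ∀ x l1, ∑ a : Fin 2, pA a x l1 = 1)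
    (hB : ∀ l1 l2, ∑ b : Fin 2, pB b l1 l2 = 1) (c x z : Fin 2) :
    ∑ a : Fin 2, ∑ b : Fin 2, ∑ l1, ∑ l2, q1 l1 * q2 l2 * pA a x l1 * pB b l1 l2 * pC c z l2 =
      ∑ l2, q2 l2 * pC c z l2 := by
  simp only [sum_comm (γ := Fin 2) (α := Λ₁), sum_comm (γ := Fin 2) (α := Λ₂)]
  rw [sum_comm]
  refine sum_congr rfl fun l2 _ => ?_
  simp only [← sum_mul, ← mul_sum, hB, hA, hq1, mul_one, one_mul]

lemma memS0_of_fintype (hq1₀ : ∀ l, 0 ≤ q1 l) (hq1 : ∑ l, q1 l = 1) (hq2₀ : ∀ l, 0 ≤ q2 l)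
    (hq2 : ∑ l, q2 l = 1) (hA₀ : ∀ a x l1, 0 ≤ pA a x l1)
    (hA : ∀ x l1, ∑ a : Fin 2, pA a x l1 = 1) (hB₀ : ∀ b l1 l2, 0 ≤ pB b l1 l2)
    (hB : ∀ l1 l2, ∑ b : Fin 2, pB b l1 l2 = 1) (hC₀ : ∀ c z l2, 0 ≤ pC c z l2)
    (hC : ∀ z l2, ∑ c : Fin 2, pC c z l2 = 1)
    (hp : ∀ a b c x z, p a b c x z =
      ∑ l1, ∑ l2, q1 l1 * q2 l2 * pA a x l1 * pB b l1 l2 * pC c z l2) :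
    MemS0 p := by
  set e1 := (Fintype.equivFin Λ₁).symm
  set e2 := (Fintype.equivFin Λ₂).symm
  refine ⟨_, _, q1 ∘ e1, q2 ∘ e2, fun a x i => pA a x (e1 i), fun b i j => pB b (e1 i) (e2 j),
    fun c z j => pC c z (e2 j), ⟨fun _ => hq1₀ _, by simpa [e1.sum_comp] using hq1⟩,
    ⟨fun _ => hq2₀ _, by simpa [e2.sum_comp] using hq2⟩, fun _ _ _ => hA₀ _ _ _,
    fun _ _ => hA _ _, fun _ _ _ => hB₀ _ _ _, fun _ _ => hB _ _, fun _ _ _ => hC₀ _ _ _,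
    fun _ _ => hC _ _, fun a b c x z => ?_⟩
  rw [hp, ← e1.sum_comp]
  exact sum_congr rfl fun i _ => (e2.sum_comp _).symm

/-- Bob's response is `I b l1 l2 / (q1 l1 * q2 l2)`, chosen arbitrarily where this is `0 / 0`. -/
lemma memS0_of_masses (hq1₀ : ∀ l, 0 ≤ q1 l) (hq1 : ∑ l, q1 l = 1) (hq2₀ : ∀ l, 0 ≤ q2 l)
    (hq2 : ∑ l, q2 l = 1) (hA₀ : ∀ a x l1, 0 ≤ pA a x l1)
    (hA : ∀ x l1, ∑ a : Fin 2, pA a x l1 = 1) (hC₀ : ∀ c z l2, 0 ≤ pC c z l2)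
    (hC : ∀ z l2, ∑ c : Fin 2, pC c z l2 = 1) {I : Fin 2 → Λ₁ → Λ₂ → ℝ}
    (hI₀ : ∀ b l1 l2, 0 ≤ I b l1 l2) (hI : ∀ l1 l2, ∑ b : Fin 2, I b l1 l2 = q1 l1 * q2 l2)
    (hp : ∀ a b c x z, p a b c x z = ∑ l1, ∑ l2, pA a x l1 * pC c z l2 * I b l1 l2) :
    MemS0 p := by
  let pB (b : Fin 2) (l1 : Λ₁) (l2 : Λ₂) : ℝ :=
    if q1 l1 * q2 l2 = 0 then 2⁻¹ else I b l1 l2 / (q1 l1 * q2 l2)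
  have hpB : ∀ b l1 l2, q1 l1 * q2 l2 * pB b l1 l2 = I b l1 l2 := by
    intro b l1 l2
    by_cases hQ : q1 l1 * q2 l2 = 0
    · have hle : I b l1 l2 ≤ q1 l1 * q2 l2 :=
        (single_le_sum (fun b' _ => hI₀ b' l1 l2) (mem_univ b)).trans_eq (hI l1 l2)
      rw [hQ, zero_mul]
      exact le_antisymm (hI₀ b l1 l2) (hle.trans_eq hQ)
    · simp only [pB, hQ, if_false, mul_div_cancel₀ _ hQ]
  refine memS0_of_fintype (pB := pB) hq1₀ hq1 hq2₀ hq2 hA₀ hA (fun b l1 l2 => ?_)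
    (fun l1 l2 => ?_) hC₀ hC fun a b c x z => ?_
  · by_cases hQ : q1 l1 * q2 l2 = 0
    · simp only [pB, hQ, if_true]
      norm_num
    · simp only [pB, hQ, if_false]
      exact div_nonneg (hI₀ b l1 l2) (mul_nonneg (hq1₀ l1) (hq2₀ l2))
  · by_cases hQ : q1 l1 * q2 l2 = 0
    · simp only [pB, hQ, if_true, Fin.sum_univ_two]
      norm_num
    · simp only [pB, hQ, if_false, ← sum_div, hI]
      exact div_self hQ
  · rw [hp]
    refine sum_congr rfl fun l1 _ => sum_congr rfl fun l2 _ => ?_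
    rw [← hpB]
    ring

end FiniteModels

section Cells

variable {Ω₁ Ω₂ S T : Type*} [MeasurableSpace Ω₁] [MeasurableSpace Ω₂] [Fintype S] [Fintype T]
  {μ : Measure Ω₁} {ν : Measure Ω₂} [SFinite μ] [SFinite ν] {σ : Ω₁ → S} {τ : Ω₂ → T}

lemma integral_integral_eq_sum_setIntegral (hσ : ∀ s, MeasurableSet (σ ⁻¹' {s}))
    (hτ : ∀ t, MeasurableSet (τ ⁻¹' {t})) {H : Ω₁ × Ω₂ → ℝ} (hH : Integrable H (μ.prod ν))
    (φ : S → ℝ) (ψ : T → ℝ) :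
    ∫ l1, ∫ l2, φ (σ l1) * H (l1, l2) * ψ (τ l2) ∂ν ∂μ =
      ∑ s, ∑ t, φ s * ψ t * ∫ ω in (σ ⁻¹' {s}) ×ˢ (τ ⁻¹' {t}), H ω ∂μ.prod ν := by
  classical
  let cell (s : S) (t : T) : Set (Ω₁ × Ω₂) := (σ ⁻¹' {s}) ×ˢ (τ ⁻¹' {t})
  let G (s : S) (t : T) (ω : Ω₁ × Ω₂) : ℝ := φ s * ψ t * (cell s t).indicator H ω
  have hcell : ∀ s t, MeasurableSet (cell s t) := fun s t => (hσ s).prod (hτ t)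
  have hG : ∀ s t, Integrable (G s t) (μ.prod ν) := fun s t =>
    (hH.indicator (hcell s t)).const_mul _
  have hGsum : Integrable (fun ω => ∑ s, ∑ t, G s t ω) (μ.prod ν) :=
    integrable_finsetSum _ fun s _ => integrable_finsetSum _ fun t _ => hG s t
  have hF : ∀ ω : Ω₁ × Ω₂, φ (σ ω.1) * H ω * ψ (τ ω.2) = ∑ s, ∑ t, G s t ω := by
    intro ω
    have hG0 : ∀ s t, s ≠ σ ω.1 ∨ t ≠ τ ω.2 → G s t ω = 0 := fun s t hst => by
      have : ω ∉ cell s t := fun hω => hst.elim (· hω.1.symm) (· hω.2.symm)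
      simp [G, this]
    rw [Fintype.sum_eq_single (σ ω.1) fun s hs => sum_eq_zero fun t _ => hG0 s t (.inl hs),
      Fintype.sum_eq_single (τ ω.2) fun t ht => hG0 _ t (.inr ht)]
    simp only [G, indicator_of_mem (show ω ∈ cell (σ ω.1) (τ ω.2) from ⟨rfl, rfl⟩)]
    ring
  calc ∫ l1, ∫ l2, φ (σ l1) * H (l1, l2) * ψ (τ l2) ∂ν ∂μ
      = ∫ ω, ∑ s, ∑ t, G s t ω ∂μ.prod ν := by
        rw [integral_prod _ hGsum]
        exact integral_congr_ae (ae_of_all _ fun l1 =>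
          integral_congr_ae (ae_of_all _ fun l2 => hF (l1, l2)))
    _ = _ := by
        rw [integral_finsetSum _ fun s _ => integrable_finsetSum _ fun t _ => hG s t]
        refine sum_congr rfl fun s _ => ?_
        rw [integral_finsetSum _ fun t _ => hG s t]
        exact sum_congr rfl fun t _ => by rw [integral_const_mul, integral_indicator (hcell s t)]

end Cells

/-- Only the deterministic responses `x ↦ fA x λ₁` and `z ↦ fC z λ₂` matter: they take
finitely many values, whose cells become the hidden values of a finite model. -/
lemma memS0_of_integral {p : Corr} {Ω₁ Ω₂ : Type*} [MeasurableSpace Ω₁] [MeasurableSpace Ω₂]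
    {μ : Measure Ω₁} {ν : Measure Ω₂} [IsProbabilityMeasure μ] [IsProbabilityMeasure ν]
    {fA : Fin 2 → Ω₁ → Fin 2} {fC : Fin 2 → Ω₂ → Fin 2} (hfA : ∀ x, Measurable (fA x))
    (hfC : ∀ z, Measurable (fC z)) {h : Fin 2 → Ω₁ → Ω₂ → ℝ}
    (hh : ∀ b, Measurable (Function.uncurry (h b))) (hh₀ : ∀ b l1 l2, 0 ≤ h b l1 l2)
    (hh₁ : ∀ l1 l2, ∑ b : Fin 2, h b l1 l2 = 1)
    (hp : ∀ a b c x z, p a b c x z =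
      ∫ l1, ∫ l2, (if fA x l1 = a then (1 : ℝ) else 0) * h b l1 l2 *
        (if fC z l2 = c then (1 : ℝ) else 0) ∂ν ∂μ) :
    MemS0 p := by
  let σ : Ω₁ → (Fin 2 → Fin 2) := fun l x => fA x l
  let τ : Ω₂ → (Fin 2 → Fin 2) := fun l z => fC z l
  have hσ : ∀ s, MeasurableSet (σ ⁻¹' {s}) :=
    fun s => measurable_pi_lambda _ hfA (measurableSet_singleton s)
  have hτ : ∀ t, MeasurableSet (τ ⁻¹' {t}) :=
    fun t => measurable_pi_lambda _ hfC (measurableSet_singleton t)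
  have hint : ∀ b, Integrable (fun ω : Ω₁ × Ω₂ => h b ω.1 ω.2) (μ.prod ν) := fun b =>
    Integrable.of_mem_Icc 0 1 (hh b).aemeasurable <| ae_of_all _ fun ω =>
      ⟨hh₀ b ω.1 ω.2, le_one_of_sum_eq_one (hh₀ · ω.1 ω.2) (hh₁ ω.1 ω.2) b⟩
  refine memS0_of_masses (q1 := fun s => μ.real (σ ⁻¹' {s})) (q2 := fun t => ν.real (τ ⁻¹' {t}))
    (pA := fun a x s => if s x = a then 1 else 0) (pC := fun c z t => if t z = c then 1 else 0)
    (I := fun b s t => ∫ ω in (σ ⁻¹' {s}) ×ˢ (τ ⁻¹' {t}), h b ω.1 ω.2 ∂μ.prod ν)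
    (fun _ => measureReal_nonneg) ?_ (fun _ => measureReal_nonneg) ?_ (fun _ _ _ => by positivity)
    (fun _ _ => by simp) (fun _ _ _ => by positivity) (fun _ _ => by simp)
    (fun b s t => setIntegral_nonneg ((hσ s).prod (hτ t)) fun ω _ => hh₀ b ω.1 ω.2)
    (fun s t => ?_) fun a b c x z => ?_
  · simpa using sum_measureReal_preimage_singleton (μ := μ) univ fun s _ => hσ s
  · simpa using sum_measureReal_preimage_singleton (μ := ν) univ fun t _ => hτ t
  · rw [← integral_finsetSum _ fun b _ => (hint b).integrableOn]
    simp only [hh₁, setIntegral_const, smul_eq_mul, mul_one]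
    exact measureReal_prod_prod _ _
  · exact (hp a b c x z).trans <| integral_integral_eq_sum_setIntegral hσ hτ (hint b)
      (fun s => if s x = a then 1 else 0) (fun t => if t z = c then 1 else 0)

section IntervalPartition

variable {W : ℕ → ℝ}

def cumSum (W : ℕ → ℝ) (k : ℕ) : ℝ := ∑ j ∈ range k, W j

/-- The index `k` of the interval `[cumSum W k, cumSum W (k + 1))` containing `l`. -/
noncomputable def cellIndex (W : ℕ → ℝ) (N : ℕ) (l : ℝ) : ℕ :=
  ∑ j ∈ range N, if cumSum W (j + 1) ≤ l then 1 else 0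

lemma cumSum_succ (k : ℕ) : cumSum W (k + 1) = cumSum W k + W k := sum_range_succ W k

lemma monotone_cumSum (hW : ∀ k, 0 ≤ W k) : Monotone (cumSum W) :=
  monotone_nat_of_le_succ fun k => by rw [cumSum_succ]; linarith [hW k]

lemma mem_Ico_cumSum_block (hW : ∀ k, 0 ≤ W k) {n k : ℕ} (hn : 0 < n) {l : ℝ}
    (hl : l ∈ Ico (cumSum W k) (cumSum W (k + 1))) :
    l ∈ Ico (cumSum W (n * (k / n))) (cumSum W (n * (k / n + 1))) :=
  ⟨(monotone_cumSum hW (Nat.mul_div_le k n)).trans hl.1,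
    hl.2.trans_le (monotone_cumSum hW (Nat.lt_mul_div_succ k hn))⟩

lemma Ico_cumSum_eq_biUnion (hW : ∀ k, 0 ≤ W k) (N : ℕ) :
    Ico 0 (cumSum W N) = ⋃ k ∈ range N, Ico (cumSum W k) (cumSum W (k + 1)) := by
  induction N with
  | zero => simp [cumSum]
  | succ N ih =>
    rw [range_add_one, Finset.set_biUnion_insert, ← ih, union_comm,
      Ico_union_Ico_eq_Ico (by simpa [cumSum] using monotone_cumSum hW (Nat.zero_le N))
        (monotone_cumSum hW N.le_succ)]

lemma cellIndex_eq (hW : ∀ k, 0 ≤ W k) {N k : ℕ} (hk : k < N) {l : ℝ}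
    (hl : l ∈ Ico (cumSum W k) (cumSum W (k + 1))) : cellIndex W N l = k := by
  have hcut : ∀ j, cumSum W (j + 1) ≤ l ↔ j < k := fun j =>
    ⟨fun h => by
      by_contra! hjk
      exact (h.trans_lt hl.2).not_ge (monotone_cumSum hW (by omega)),
     fun h => (monotone_cumSum hW h).trans hl.1⟩
  simp only [cellIndex, hcut, sum_boole, Nat.cast_id]
  rw [show (range N).filter (· < k) = range k by ext j; simp; omega, card_range]

lemma cellIndex_lt_and_mem_Ico (hW : ∀ k, 0 ≤ W k) {N : ℕ} {l : ℝ}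
    (hl : l ∈ Ico 0 (cumSum W N)) :
    cellIndex W N l < N ∧
      l ∈ Ico (cumSum W (cellIndex W N l)) (cumSum W (cellIndex W N l + 1)) := by
  rw [Ico_cumSum_eq_biUnion hW] at hl
  obtain ⟨k, hk, hlk⟩ := mem_iUnion₂.1 hl
  rw [cellIndex_eq hW (mem_range.1 hk) hlk]
  exact ⟨mem_range.1 hk, hlk⟩

lemma measurable_cellIndex (W : ℕ → ℝ) (N : ℕ) : Measurable (cellIndex W N) :=
  Finset.measurable_sum _ fun _ _ =>
    Measurable.ite measurableSet_Ici measurable_const measurable_const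

lemma setIntegral_comp_cellIndex (hW : ∀ k, 0 ≤ W k) (N : ℕ) (φ : ℕ → ℝ) :
    ∫ l in Ico 0 (cumSum W N), φ (cellIndex W N l) = ∑ k ∈ range N, φ k * W k := by
  have hconst : ∀ k ∈ range N, EqOn (fun l => φ (cellIndex W N l)) (fun _ => φ k)
      (Ico (cumSum W k) (cumSum W (k + 1))) := fun k hk l hl =>
    congrArg φ (cellIndex_eq hW (mem_range.1 hk) hl)
  have hdisj := (monotone_cumSum hW).pairwise_disjoint_on_Ico_succ
  simp only [Order.succ_eq_add_one] at hdisj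
  rw [Ico_cumSum_eq_biUnion hW, integral_biUnion_finset _ (fun _ _ => measurableSet_Ico)
    (hdisj.set_pairwise _) fun k hk =>
      (integrableOn_const (C := φ k) (by simp)).congr_fun (hconst k hk).symm measurableSet_Ico]
  refine sum_congr rfl fun k hk => ?_
  rw [setIntegral_congr_fun measurableSet_Ico (hconst k hk), setIntegral_const,
    Real.volume_real_Ico_of_le (monotone_cumSum hW k.le_succ), cumSum_succ, smul_eq_mul]
  ring

end IntervalPartition

section IntervalResponse

/-- The cut points `0 ≤ α ≤ P0 ≤ P0 + P1 - α ≤ 1` of `intervalResp P0 P1 α`. -/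
def thresholds (P0 P1 α : ℝ) : ℕ → ℝ
  | 0 => 0
  | 1 => α
  | 2 => P0
  | 3 => P0 + P1 - α
  | _ => 1

noncomputable def intervalResp (P0 P1 α : ℝ) (x : Fin 2) (l : ℝ) : Fin 2 :=
  if x = 0 then (if l < P0 then 1 else 0)
  else (if l < α ∨ (P0 ≤ l ∧ l < P0 + P1 - α) then 1 else 0)

/-- The four deterministic responses `(f 0, f 1) = (1,1), (1,0), (0,1), (0,0)`, in the order
in which `intervalResp` runs through them. -/
def detResp (x : Fin 2) (t : ℕ) : Fin 2 :=
  if x = 0 then (if t ≤ 1 then 1 else 0) else (if t = 0 ∨ t = 2 then 1 else 0)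

lemma intervalResp_eq_detResp {P0 P1 α : ℝ} (h0 : α ≤ P0) (h1 : α ≤ P1) (x : Fin 2) {t : ℕ}
    (ht : t < 4) {l : ℝ} (hl : l ∈ Ico (thresholds P0 P1 α t) (thresholds P0 P1 α (t + 1))) :
    intervalResp P0 P1 α x l = detResp x t := by
  obtain ⟨hl0, hl1⟩ := hl
  interval_cases t <;> fin_cases x <;> simp_all [thresholds, intervalResp, detResp] <;> linarith

lemma measurable_intervalResp (P0 P1 α : ℝ) (x : Fin 2) :
    Measurable (intervalResp P0 P1 α x) := by
  unfold intervalResp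
  split_ifs
  · exact Measurable.ite measurableSet_Iio measurable_const measurable_const
  · exact Measurable.ite (measurableSet_Iio.union (measurableSet_Ici.inter measurableSet_Iio))
      measurable_const measurable_const

/-- The weights of the four deterministic responses in a binary response `f` with
`P(f x = 1) = u x`: the lengths of the pieces into which
`intervalResp (u 0) (u 1) (min (u 0) (u 1))` cuts `[0, 1]`. -/
def coupling (u : Fin 2 → ℝ) (t : ℕ) : ℝ :=
  thresholds (u 0) (u 1) (min (u 0) (u 1)) (t + 1) - thresholds (u 0) (u 1) (min (u 0) (u 1)) t

lemma coupling_nonneg {u : Fin 2 → ℝ} (hu : ∀ x, u x ∈ Set.Icc 0 1) (t : ℕ) :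
    0 ≤ coupling u t := by
  have := min_add_max (u 0) (u 1)
  have := max_le (hu 0).2 (hu 1).2
  have := le_min (hu 0).1 (hu 1).1
  have := min_le_left (u 0) (u 1)
  have := min_le_right (u 0) (u 1)
  match t with
  | 0 | 1 | 2 | 3 | _ + 4 => simp only [coupling, thresholds]; linarith

lemma sum_range_coupling (u : Fin 2 → ℝ) (t : ℕ) :
    ∑ s ∈ range t, coupling u s = thresholds (u 0) (u 1) (min (u 0) (u 1)) t :=
  (sum_range_sub _ t).trans (sub_zero _)

lemma sum_detResp_mul_coupling (u : Fin 2 → ℝ) (x a : Fin 2) :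
    ∑ t ∈ range 4, (if detResp x t = a then 1 else 0) * coupling u t =
      if a = 1 then u x else 1 - u x := by
  fin_cases x <;> fin_cases a <;> simp [sum_range_succ, coupling, thresholds, detResp] <;> ring

lemma sum_mul_thresholds {ι : Type*} [Fintype ι] {q : ι → ℝ} (hq : ∑ i, q i = 1)
    (P0 P1 α : ι → ℝ) (t : ℕ) :
    ∑ i, q i * thresholds (P0 i) (P1 i) (α i) t =
      thresholds (∑ i, q i * P0 i) (∑ i, q i * P1 i) (∑ i, q i * α i) t := by
  match t with
  | 0 => simp [thresholds]
  | 1 | 2 => rfl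
  | 3 => simp only [thresholds, mul_sub, mul_add, sum_sub_distrib, sum_add_distrib]
  | _ + 4 => simp [thresholds, hq]

lemma sum_mul_min_mem_bounds {ι : Type*} [Fintype ι] {q : ι → ℝ} (hq₀ : ∀ i, 0 ≤ q i)
    (hq : ∑ i, q i = 1) {u v : ι → ℝ} (hu : ∀ i, u i ∈ Set.Icc 0 1)
    (hv : ∀ i, v i ∈ Set.Icc 0 1) :
    max 0 (∑ i, q i * u i + ∑ i, q i * v i - 1) ≤ ∑ i, q i * min (u i) (v i) ∧
      ∑ i, q i * min (u i) (v i) ≤ min (∑ i, q i * u i) (∑ i, q i * v i) := by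
  have hlow : ∑ i, q i * (u i + v i - 1) ≤ ∑ i, q i * min (u i) (v i) :=
    sum_le_sum fun i _ => mul_le_mul_of_nonneg_left
      (le_min (by linarith [(hv i).2]) (by linarith [(hu i).2])) (hq₀ i)
  simp only [mul_sub, mul_add, mul_one, sum_sub_distrib, sum_add_distrib, hq] at hlow
  refine ⟨max_le (sum_nonneg fun i _ => mul_nonneg (hq₀ i) (le_min (hu i).1 (hv i).1)) hlow,
    le_min ?_ ?_⟩ <;>
  exact sum_le_sum fun i _ => mul_le_mul_of_nonneg_left (by simp) (hq₀ i)

end IntervalResponse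

section Stacking

variable {n : ℕ} [NeZero n] {q : Fin n → ℝ} {u : Fin n → Fin 2 → ℝ}

/-- Weights of the partition of `[0, 1]` in which the `(n t + i)`-th interval carries the hidden
value `i` together with the `t`-th deterministic response: grouping by `t` first is what makes
the response a function of the position alone. -/
def stackWeight (q : Fin n → ℝ) (u : Fin n → Fin 2 → ℝ) (k : ℕ) : ℝ :=
  q (Fin.ofNat n k) * coupling (u (Fin.ofNat n k)) (k / n)

omit [NeZero n] in
lemma mul_add_div_eq (t : ℕ) (i : Fin n) : (n * t + i) / n = t := by
  rw [Nat.mul_add_div (Fin.pos i), Nat.div_eq_of_lt i.isLt, add_zero]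

lemma ofNat_mul_add (t : ℕ) (i : Fin n) : Fin.ofNat n (n * t + i) = i :=
  Fin.ext <| by simp [Nat.mod_eq_of_lt i.isLt]

lemma stackWeight_mul_add (t : ℕ) (i : Fin n) :
    stackWeight q u (n * t + i) = q i * coupling (u i) t := by
  rw [stackWeight, ofNat_mul_add, mul_add_div_eq]

lemma stackWeight_nonneg (hq₀ : ∀ i, 0 ≤ q i) (hu : ∀ i x, u i x ∈ Set.Icc 0 1) (k : ℕ) :
    0 ≤ stackWeight q u k :=
  mul_nonneg (hq₀ _) (coupling_nonneg (hu _) _)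

lemma cumSum_stackWeight (hq : ∑ i, q i = 1) (t : ℕ) :
    cumSum (stackWeight q u) (n * t) = thresholds (∑ i, q i * u i 0) (∑ i, q i * u i 1)
      (∑ i, q i * min (u i 0) (u i 1)) t := by
  simp only [cumSum, sum_range_mul_eq_sum_fin, stackWeight_mul_add]
  rw [sum_comm]
  simp only [← mul_sum, sum_range_coupling]
  exact sum_mul_thresholds hq _ _ _ t

end Stacking

/-- `label` pushes Lebesgue measure on `[0, 1]` forward to `q`, and given `label = i` the
interval response to `x` has law `r · x i`. -/
lemma exists_intervalResp_realization {n : ℕ} {q : Fin n → ℝ} (hq : IsWeights q)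
    {r : Fin 2 → Fin 2 → Fin n → ℝ} (hr₀ : ∀ a x i, 0 ≤ r a x i)
    (hr : ∀ x i, ∑ a : Fin 2, r a x i = 1) :
    ∃ α : ℝ,
      max 0 (∑ i, q i * r 1 0 i + ∑ i, q i * r 1 1 i - 1) ≤ α ∧
      α ≤ min (∑ i, q i * r 1 0 i) (∑ i, q i * r 1 1 i) ∧
      ∃ label : ℝ → Fin n, Measurable label ∧ ∀ (ψ : Fin n → ℝ) (x a : Fin 2),
        ∫ l in Set.Icc (0 : ℝ) 1,
            (if intervalResp (∑ i, q i * r 1 0 i) (∑ i, q i * r 1 1 i) α x l = a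
              then (1 : ℝ) else 0) * ψ (label l) =
          ∑ i, q i * r a x i * ψ i := by
  obtain ⟨hq₀, hq⟩ := hq
  have : NeZero n := ⟨by rintro rfl; simp at hq⟩
  set u : Fin n → Fin 2 → ℝ := fun i x => r 1 x i
  have hu : ∀ i x, u i x ∈ Set.Icc 0 1 := fun i x =>
    ⟨hr₀ 1 x i, le_one_of_sum_eq_one (hr₀ · x i) (hr x i) 1⟩
  have hbounds := sum_mul_min_mem_bounds hq₀ hq (fun i => hu i 0) (fun i => hu i 1)
  set W := stackWeight q u
  have hW : ∀ k, 0 ≤ W k := stackWeight_nonneg hq₀ hu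
  have hcut := cumSum_stackWeight (u := u) hq
  refine ⟨_, hbounds.1, hbounds.2, fun l => Fin.ofNat n (cellIndex W (n * 4) l),
    (measurable_from_nat (f := Fin.ofNat n)).comp (measurable_cellIndex W (n * 4)),
    fun ψ x a => ?_⟩
  have hone : Ico (0 : ℝ) 1 = Ico 0 (cumSum W (n * 4)) := by rw [hcut]; rfl
  have hresp : ∀ l ∈ Ico 0 (cumSum W (n * 4)),
      intervalResp (∑ i, q i * u i 0) (∑ i, q i * u i 1) (∑ i, q i * min (u i 0) (u i 1)) x l =
        detResp x (cellIndex W (n * 4) l / n) := by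
    intro l hl
    obtain ⟨hk, hlk⟩ := cellIndex_lt_and_mem_Ico hW hl
    have := mem_Ico_cumSum_block hW (Fin.pos (0 : Fin n)) hlk
    rw [hcut, hcut] at this
    exact intervalResp_eq_detResp (hbounds.2.trans (min_le_left _ _))
      (hbounds.2.trans (min_le_right _ _)) x (Nat.div_lt_of_lt_mul hk) this
  rw [integral_Icc_eq_integral_Ico, hone, setIntegral_congr_fun measurableSet_Ico
    (fun l hl => by rw [hresp l hl]), setIntegral_comp_cellIndex hW _
    (fun k => (if detResp x (k / n) = a then 1 else 0) * ψ (Fin.ofNat n k)),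
    sum_range_mul_eq_sum_fin, sum_comm]
  refine sum_congr rfl fun i _ => ?_
  simp only [W, stackWeight_mul_add, ofNat_mul_add, mul_add_div_eq]
  rw [eq_ite_of_sum_eq_one (hr x i) a, ← sum_detResp_mul_coupling (u i), mul_sum, sum_mul]
  exact sum_congr rfl fun t _ => by ring

def IsIntervalModel (p : Corr) (α β : ℝ) (g : ℝ → ℝ → ℝ) : Prop :=
  max 0 (margP0 p + margP1 p - 1) ≤ α ∧ α ≤ min (margP0 p) (margP1 p) ∧
  max 0 (margR0 p + margR1 p - 1) ≤ β ∧ β ≤ min (margR0 p) (margR1 p) ∧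
  Measurable (Function.uncurry g) ∧
  (∀ l1 l2, 0 ≤ g l1 l2 ∧ g l1 l2 ≤ 1) ∧
  ∀ a b c x z, p a b c x z =
    ∫ l1 in Set.Icc (0 : ℝ) 1, ∫ l2 in Set.Icc (0 : ℝ) 1,
      (if intervalResp (margP0 p) (margP1 p) α x l1 = a then (1 : ℝ) else 0) *
        (if b = 1 then g l1 l2 else 1 - g l1 l2) *
        (if intervalResp (margR0 p) (margR1 p) β z l2 = c then (1 : ℝ) else 0)

theorem _root_.MemS0.exists_isIntervalModel {p : Corr} (h : MemS0 p) :
    ∃ α β g, IsIntervalModel p α β g := by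
  obtain ⟨n1, n2, q1, q2, pA, pB, pC, hq1, hq2, hA₀, hA, hB₀, hB, hC₀, hC, hp⟩ := h
  have hP0 : margP0 p = ∑ i, q1 i * pA 1 0 i := by
    simp only [margP0, hp]; exact chain_marginal_left hq2.2 hB hC 1 0 0
  have hP1 : margP1 p = ∑ i, q1 i * pA 1 1 i := by
    simp only [margP1, hp]; exact chain_marginal_left hq2.2 hB hC 1 1 0
  have hR0 : margR0 p = ∑ j, q2 j * pC 1 0 j := by
    simp only [margR0, hp]; exact chain_marginal_right hq1.2 hA hB 1 0 0
  have hR1 : margR1 p = ∑ j, q2 j * pC 1 1 j := by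
    simp only [margR1, hp]; exact chain_marginal_right hq1.2 hA hB 1 0 1
  obtain ⟨α, hα₀, hα₁, labelA, hlabelA, hA_real⟩ := exists_intervalResp_realization hq1 hA₀ hA
  obtain ⟨β, hβ₀, hβ₁, labelC, hlabelC, hC_real⟩ := exists_intervalResp_realization hq2 hC₀ hC
  refine ⟨α, β, fun l1 l2 => pB 1 (labelA l1) (labelC l2), ?_⟩
  rw [IsIntervalModel, hP0, hP1, hR0, hR1]
  refine ⟨hα₀, hα₁, hβ₀, hβ₁,
    (Measurable.of_discrete (f := Function.uncurry (pB 1))).comp (hlabelA.prodMap hlabelC),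
    fun l1 l2 => ⟨hB₀ _ _ _, le_one_of_sum_eq_one (hB₀ · _ _) (hB _ _) 1⟩, fun a b c x z => ?_⟩
  calc p a b c x z = ∑ i, q1 i * pA a x i * ∑ j, q2 j * pC c z j * pB b i j := by
        rw [hp]
        refine sum_congr rfl fun i _ => ?_
        rw [mul_sum]
        exact sum_congr rfl fun j _ => by ring
    _ = ∫ l1 in Set.Icc (0 : ℝ) 1,
          (if intervalResp (∑ i, q1 i * pA 1 0 i) (∑ i, q1 i * pA 1 1 i) α x l1 = a
            then (1 : ℝ) else 0) * ∑ j, q2 j * pC c z j * pB b (labelA l1) j :=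
        (hA_real _ x a).symm
    _ = _ := by
        congr 1
        ext l1
        rw [← hC_real (pB b (labelA l1)) z c, ← integral_const_mul]
        congr 1
        ext l2
        rw [← eq_ite_of_sum_eq_one (hB _ _)]
        ring

theorem IsIntervalModel.memS0 {p : Corr} {α β : ℝ} {g : ℝ → ℝ → ℝ}
    (h : IsIntervalModel p α β g) : MemS0 p := by
  obtain ⟨-, -, -, -, hg, hg01, hp⟩ := h
  have : IsProbabilityMeasure (volume.restrict (Set.Icc (0 : ℝ) 1)) := ⟨by simp⟩
  refine memS0_of_integral (measurable_intervalResp _ _ _) (measurable_intervalResp _ _ _)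
    (h := fun b l1 l2 => if b = 1 then g l1 l2 else 1 - g l1 l2) (fun b => ?_)
    (fun b l1 l2 => ?_) (fun l1 l2 => by simp [Fin.sum_univ_two]) hp
  · by_cases hb : b = 1
    · simpa only [hb, if_true] using hg
    · simp only [hb, if_false]
      exact measurable_const.sub hg
  · have := hg01 l1 l2
    split_ifs <;> linarith

end ThreeChain

theorem s0_interval_oracle_general (p : Corr) :
    MemS0 p ↔
    ∃ (α β : ℝ) (g : ℝ → ℝ → ℝ),
      max 0 (margP0 p + margP1 p - 1) ≤ α ∧ α ≤ min (margP0 p) (margP1 p) ∧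
      max 0 (margR0 p + margR1 p - 1) ≤ β ∧ β ≤ min (margR0 p) (margR1 p) ∧
      Measurable (Function.uncurry g) ∧
      (∀ l1 l2, 0 ≤ g l1 l2 ∧ g l1 l2 ≤ 1) ∧
      (∀ a b c x z, p a b c x z =
        ∫ l1 in Set.Icc (0 : ℝ) 1, ∫ l2 in Set.Icc (0 : ℝ) 1,
          (if (if x = 0 then (if l1 < margP0 p then (1 : Fin 2) else 0)
               else (if l1 < α ∨ (margP0 p ≤ l1 ∧ l1 < margP0 p + margP1 p - α)
                     then (1 : Fin 2) else 0)) = a then (1 : ℝ) else 0) *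
            (if b = 1 then g l1 l2 else 1 - g l1 l2) *
            (if (if z = 0 then (if l2 < margR0 p then (1 : Fin 2) else 0)
                 else (if l2 < β ∨ (margR0 p ≤ l2 ∧ l2 < margR0 p + margR1 p - β)
                       then (1 : Fin 2) else 0)) = c then (1 : ℝ) else 0)) :=
  ⟨MemS0.exists_isIntervalModel, fun ⟨_, _, _, h⟩ => ThreeChain.IsIntervalModel.memS0 h⟩

/-- ordered-interval (oracle) representation of `S0`: `p ∈ S0` iff
there are `α`, `β` within the stated bounds and a measurable `g : [0,1]² → [0,1]`
such that `p` arises from the explicit interval response functions. -/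
theorem s0_interval_oracle (p : Corr) (hp : IsCorrelation p) :
    MemS0 p ↔
    ∃ (α β : ℝ) (g : ℝ → ℝ → ℝ),
      max 0 (margP0 p + margP1 p - 1) ≤ α ∧ α ≤ min (margP0 p) (margP1 p) ∧
      max 0 (margR0 p + margR1 p - 1) ≤ β ∧ β ≤ min (margR0 p) (margR1 p) ∧
      Measurable (Function.uncurry g) ∧
      (∀ l1 l2, 0 ≤ g l1 l2 ∧ g l1 l2 ≤ 1) ∧
      (∀ a b c x z, p a b c x z =
        ∫ l1 in Set.Icc (0 : ℝ) 1, ∫ l2 in Set.Icc (0 : ℝ) 1,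
          (if (if x = 0 then (if l1 < margP0 p then (1 : Fin 2) else 0)
               else (if l1 < α ∨ (margP0 p ≤ l1 ∧ l1 < margP0 p + margP1 p - α)
                     then (1 : Fin 2) else 0)) = a then (1 : ℝ) else 0) *
            (if b = 1 then g l1 l2 else 1 - g l1 l2) *
            (if (if z = 0 then (if l2 < margR0 p then (1 : Fin 2) else 0)
                 else (if l2 < β ∨ (margR0 p ≤ l2 ∧ l2 < margR0 p + margR1 p - β)
                       then (1 : Fin 2) else 0)) = c then (1 : ℝ) else 0)) :=
  s0_interval_oracle_general p
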